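/- Let A be a canonical quasi-Babelian 3×3 advantage matrix with parameters a, b > 0 (a₂₁ = a₃₁ = b and all other off-diagonal entries equal to a), let ρ = b/a, and let F : S₃ → S₃ be the associated Variational Learning dynamics. If ρ > 2, then the vertex fixed point v₁ = (1,0,0) is asymptotically stable: there exists a relative neighbourhood U of v₁ in S₃ such that for every q ∈ U the iterates Fⁿ(q) converge to v₁. If 0 < ρ < 2, then v₁ is not asymptotically stable: for every relative neighbourhood U of v₁ in S₃ there exists q ∈ U whose iterates under F do not converge to v₁. -/

import Mathlib

/-! Write `σ(p) = p 1 + p 2` for the mass off `v₁ = vertex 0`. For the quasi-Babelian matrix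
one step of the dynamics multiplies `σ` by `r(p) = a (c₁ + c₂) / D(p)`, where `D` is the common
denominator; `r` is continuous with `r(v₁) = 2a/b = 2/ρ`, and on the simplex `σ` is the
sup-distance to `v₁`. If `ρ > 2`, then `r < 1` on a small `σ`-ball, which is therefore invariant
and on which `σ` decays geometrically. If `ρ < 2`, then `r ≥ 1` on a small `σ`-ball, so along an
orbit with `σ > 0` (positivity of `σ` is preserved) `σ` stops decreasing once it is small and
cannot tend to `0`. -/

open Finset Filter Topology

/-- The simplex `S₃` of probability vectors over three grammars. -/
def simplex3 : Set (Fin 3 → ℝ) :=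
  {p | (∀ i, 0 ≤ p i) ∧ ∑ i, p i = 1}

/-- The penalty probability `c_i(p) = ∑_{j ≠ i} a_{ij} p_j`. -/
def penalty (A : Matrix (Fin 3) (Fin 3) ℝ) (p : Fin 3 → ℝ) (i : Fin 3) : ℝ :=
  ∑ j ∈ Finset.univ.filter (fun j => j ≠ i), A i j * p j

/-- The Variational Learning dynamics
`F_i(p) = ∏_{j ≠ i} c_j(p) / ∑_m ∏_{k ≠ m} c_k(p)`. -/
noncomputable def VLdyn (A : Matrix (Fin 3) (Fin 3) ℝ) (p : Fin 3 → ℝ) (i : Fin 3) : ℝ :=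
  (∏ j ∈ Finset.univ.filter (fun j => j ≠ i), penalty A p j) /
    (∑ m, ∏ k ∈ Finset.univ.filter (fun k => k ≠ m), penalty A p k)

/-- The vertex `v_i` of the simplex, i.e. the state of total dominance of grammar `G_i`. -/
def vertex (i : Fin 3) : Fin 3 → ℝ := fun j => if j = i then 1 else 0

open Set

section Iterates

variable {α : Type*} {f : α → α} {s : Set α} {V : α → ℝ}

theorem tendsto_iterate_zero_of_contracting {c : ℝ} (hc0 : 0 ≤ c) (hc1 : c < 1)
    (hf : MapsTo f s s) (hV0 : ∀ x ∈ s, 0 ≤ V x) (hV : ∀ x ∈ s, V (f x) ≤ c * V x)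
    {x : α} (hx : x ∈ s) : Tendsto (fun n => V (f^[n] x)) atTop (𝓝 0) := by
  have bound : ∀ n, V (f^[n] x) ≤ c ^ n * V x := by
    intro n
    induction n with
    | zero => simp
    | succ n ih =>
      rw [Function.iterate_succ_apply', pow_succ', mul_assoc]
      exact (hV _ (hf.iterate n hx)).trans (mul_le_mul_of_nonneg_left ih hc0)
  refine squeeze_zero (fun n => hV0 _ (hf.iterate n hx)) bound ?_
  simpa using (tendsto_pow_atTop_nhds_zero_of_lt_one hc0 hc1).mul_const (V x)

theorem not_tendsto_iterate_zero_of_nondecreasing {δ : ℝ} (hδ : 0 < δ) (hf : MapsTo f s s)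
    (hpos : ∀ x ∈ s, 0 < V x → 0 < V (f x)) (hV : ∀ x ∈ s, V x < δ → V x ≤ V (f x))
    {x : α} (hx : x ∈ s) (hVx : 0 < V x) : ¬ Tendsto (fun n => V (f^[n] x)) atTop (𝓝 0) := by
  intro h
  obtain ⟨N, hN⟩ := eventually_atTop.1 (h.eventually (gt_mem_nhds hδ))
  have pos : ∀ n, 0 < V (f^[n] x) := by
    intro n
    induction n with
    | zero => exact hVx
    | succ n ih =>
      rw [Function.iterate_succ_apply']
      exact hpos _ (hf.iterate n hx) ih
  have mono : ∀ k, V (f^[N] x) ≤ V (f^[k + N] x) := by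
    intro k
    induction k with
    | zero => simp
    | succ k ih =>
      rw [add_right_comm, Function.iterate_succ_apply']
      exact ih.trans (hV _ (hf.iterate _ hx) (hN _ (Nat.le_add_left N k)))
  exact (pos N).not_ge (ge_of_tendsto' (h.comp (tendsto_add_atTop_nat N)) mono)

end Iterates

section Dynamics

variable {A : Matrix (Fin 3) (Fin 3) ℝ} {p : Fin 3 → ℝ}

noncomputable def vlDenom (A : Matrix (Fin 3) (Fin 3) ℝ) (p : Fin 3 → ℝ) : ℝ :=
  ∑ m, ∏ k ∈ univ.filter (fun k => k ≠ m), penalty A p k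

theorem vlDenom_eq (A : Matrix (Fin 3) (Fin 3) ℝ) (p : Fin 3 → ℝ) :
    vlDenom A p = penalty A p 1 * penalty A p 2 + penalty A p 0 * penalty A p 2
      + penalty A p 0 * penalty A p 1 := by
  simp [vlDenom, prod_filter, Fin.prod_univ_three, Fin.sum_univ_three]

theorem VLdyn_apply_one (A : Matrix (Fin 3) (Fin 3) ℝ) (p : Fin 3 → ℝ) :
    VLdyn A p 1 = penalty A p 0 * penalty A p 2 / vlDenom A p := by
  simp [VLdyn, vlDenom, prod_filter, Fin.prod_univ_three]

theorem VLdyn_apply_two (A : Matrix (Fin 3) (Fin 3) ℝ) (p : Fin 3 → ℝ) :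
    VLdyn A p 2 = penalty A p 0 * penalty A p 1 / vlDenom A p := by
  simp [VLdyn, vlDenom, prod_filter, Fin.prod_univ_three]

theorem penalty_nonneg (hA : ∀ i j, 0 ≤ A i j) (hp : ∀ j, 0 ≤ p j) (i : Fin 3) :
    0 ≤ penalty A p i :=
  sum_nonneg fun j _ => mul_nonneg (hA i j) (hp j)

theorem continuous_penalty (A : Matrix (Fin 3) (Fin 3) ℝ) (i : Fin 3) :
    Continuous fun p => penalty A p i := by
  unfold penalty; fun_prop

theorem continuous_vlDenom (A : Matrix (Fin 3) (Fin 3) ℝ) : Continuous (vlDenom A) := by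
  unfold vlDenom penalty; fun_prop

theorem VLdyn_mem_simplex3 (hc : ∀ i, 0 ≤ penalty A p i) (hD : 0 < vlDenom A p) :
    VLdyn A p ∈ simplex3 := by
  refine ⟨fun i => div_nonneg (prod_nonneg fun j _ => hc j) hD.le, ?_⟩
  simp only [VLdyn, ← sum_div]
  exact div_self hD.ne'

end Dynamics

section Simplex

def offMass (p : Fin 3 → ℝ) : ℝ := p 1 + p 2

variable {p : Fin 3 → ℝ}

theorem continuous_offMass : Continuous offMass := by
  unfold offMass; fun_prop

theorem offMass_nonneg (hp : p ∈ simplex3) : 0 ≤ offMass p :=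
  add_nonneg (hp.1 1) (hp.1 2)

theorem apply_zero_eq_one_sub_offMass (hp : p ∈ simplex3) : p 0 = 1 - offMass p := by
  have := hp.2
  rw [Fin.sum_univ_three] at this
  rw [offMass]; linarith

theorem offMass_vertex_zero : offMass (vertex 0) = 0 := by
  simp [offMass, vertex]

theorem vertex_mem_simplex3 (i : Fin 3) : vertex i ∈ simplex3 :=
  ⟨fun j => by unfold vertex; split_ifs <;> norm_num, by simp [vertex]⟩

theorem dist_vertex_zero_le_offMass (hp : p ∈ simplex3) : dist p (vertex 0) ≤ offMass p := by
  have h0 := apply_zero_eq_one_sub_offMass hp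
  have hσ := offMass_nonneg hp
  have h1 := hp.1 1
  have h2 := hp.1 2
  refine (dist_pi_le_iff hσ).2 fun i => ?_
  fin_cases i <;> simp [vertex, Real.dist_eq, abs_le, offMass] at h0 ⊢ <;>
    constructor <;> linarith

theorem tendsto_vertex_zero_of_offMass {β : Type*} {l : Filter β} {x : β → Fin 3 → ℝ}
    (hx : ∀ n, x n ∈ simplex3) (h : Tendsto (fun n => offMass (x n)) l (𝓝 0)) :
    Tendsto x l (𝓝 (vertex 0)) :=
  tendsto_iff_dist_tendsto_zero.2 <|
    squeeze_zero (fun _ => dist_nonneg) (fun n => dist_vertex_zero_le_offMass (hx n)) h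

theorem exists_offMass_lt_of_eventually {P : (Fin 3 → ℝ) → Prop}
    (h : ∀ᶠ p in 𝓝 (vertex 0), P p) :
    ∃ δ > 0, ∀ p ∈ simplex3, offMass p < δ → P p := by
  obtain ⟨δ, hδ, hP⟩ := Metric.eventually_nhds_iff.1 h
  exact ⟨δ, hδ, fun p hp hpδ => hP ((dist_vertex_zero_le_offMass hp).trans_lt hpδ)⟩

theorem simplex3_inter_offMass_lt_mem_nhdsWithin {δ : ℝ} (hδ : 0 < δ) :
    simplex3 ∩ {p | offMass p < δ} ∈ 𝓝[simplex3] (vertex 0) :=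
  inter_mem_nhdsWithin _ <| continuous_offMass.continuousAt.preimage_mem_nhds <|
    Iio_mem_nhds (by rwa [offMass_vertex_zero])

theorem exists_mem_simplex3_offMass_pos {U : Set (Fin 3 → ℝ)}
    (hU : U ∈ 𝓝[simplex3] (vertex 0)) : ∃ q ∈ U, q ∈ simplex3 ∧ 0 < offMass q := by
  have hedge : Tendsto (fun t : ℝ => ![1 - t, t, 0]) (𝓝[>] 0) (𝓝[simplex3] (vertex 0)) := by
    refine tendsto_nhdsWithin_iff.2 ⟨?_, ?_⟩
    · have : (![1 - 0, 0, 0] : Fin 3 → ℝ) = vertex 0 := by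
        ext i; fin_cases i <;> simp [vertex]
      rw [← this]
      exact (Continuous.tendsto (by fun_prop) _).mono_left nhdsWithin_le_nhds
    · filter_upwards [Ioo_mem_nhdsGT one_pos] with t ht
      refine ⟨fun i => ?_, by simp [Fin.sum_univ_three]⟩
      fin_cases i <;> simp <;> linarith [ht.1, ht.2]
  obtain ⟨t, ⟨htU, htS⟩, ht⟩ :=
    ((hedge.eventually (inter_mem hU self_mem_nhdsWithin)).and self_mem_nhdsWithin).exists
  exact ⟨_, htU, htS, by simpa [offMass] using ht⟩

end Simplex

section QuasiBabelian

def quasiBabelian (a b : ℝ) : Matrix (Fin 3) (Fin 3) ℝ := !![0, a, a; b, 0, a; b, a, 0]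

variable {a b : ℝ} {p : Fin 3 → ℝ}

theorem penalty_quasiBabelian_zero (a b : ℝ) (p : Fin 3 → ℝ) :
    penalty (quasiBabelian a b) p 0 = a * offMass p := by
  simp [penalty, quasiBabelian, offMass, sum_filter, Fin.sum_univ_three]; ring

theorem penalty_quasiBabelian_one (a b : ℝ) (p : Fin 3 → ℝ) :
    penalty (quasiBabelian a b) p 1 = b * p 0 + a * p 2 := by
  simp [penalty, quasiBabelian, sum_filter, Fin.sum_univ_three]

theorem penalty_quasiBabelian_two (a b : ℝ) (p : Fin 3 → ℝ) :
    penalty (quasiBabelian a b) p 2 = b * p 0 + a * p 1 := by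
  simp [penalty, quasiBabelian, sum_filter, Fin.sum_univ_three]

theorem quasiBabelian_nonneg (ha : 0 ≤ a) (hb : 0 ≤ b) (i j : Fin 3) :
    0 ≤ quasiBabelian a b i j := by
  fin_cases i <;> fin_cases j <;> simp [quasiBabelian, ha, hb]

/-- If `p₀ > 0` then `c₁ c₂ > 0`; otherwise `c₀ = a` and `c₁ + c₂ = a`. -/
theorem vlDenom_quasiBabelian_pos (ha : 0 < a) (hb : 0 < b) (hp : p ∈ simplex3) :
    0 < vlDenom (quasiBabelian a b) p := by
  have hc : ∀ i, 0 ≤ penalty (quasiBabelian a b) p i :=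
    penalty_nonneg (quasiBabelian_nonneg ha.le hb.le) hp.1
  have h0 := apply_zero_eq_one_sub_offMass hp
  rw [vlDenom_eq]
  rcases (hp.1 0).lt_or_eq with hpos | hzero
  · have h1 : 0 < penalty (quasiBabelian a b) p 1 := by
      rw [penalty_quasiBabelian_one]; nlinarith [hp.1 2]
    have h2 : 0 < penalty (quasiBabelian a b) p 2 := by
      rw [penalty_quasiBabelian_two]; nlinarith [hp.1 1]
    nlinarith [mul_pos h1 h2, mul_nonneg (hc 0) (hc 1), mul_nonneg (hc 0) (hc 2)]
  · have hσ : offMass p = 1 := by linarith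
    have hsum : penalty (quasiBabelian a b) p 1 + penalty (quasiBabelian a b) p 2 = a := by
      rw [penalty_quasiBabelian_one, penalty_quasiBabelian_two, ← hzero]
      rw [offMass] at hσ; linear_combination a * hσ
    rw [penalty_quasiBabelian_zero, hσ]
    nlinarith [mul_nonneg (hc 1) (hc 2)]

theorem VLdyn_quasiBabelian_mapsTo (ha : 0 < a) (hb : 0 < b) :
    MapsTo (VLdyn (quasiBabelian a b)) simplex3 simplex3 := fun _ hp =>
  VLdyn_mem_simplex3 (penalty_nonneg (quasiBabelian_nonneg ha.le hb.le) hp.1)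
    (vlDenom_quasiBabelian_pos ha hb hp)

noncomputable def offMassRate (a b : ℝ) (p : Fin 3 → ℝ) : ℝ :=
  a * (penalty (quasiBabelian a b) p 1 + penalty (quasiBabelian a b) p 2) /
    vlDenom (quasiBabelian a b) p

theorem offMass_VLdyn_quasiBabelian (a b : ℝ) (p : Fin 3 → ℝ) :
    offMass (VLdyn (quasiBabelian a b) p) = offMassRate a b p * offMass p := by
  rw [offMass, VLdyn_apply_one, VLdyn_apply_two, offMassRate, penalty_quasiBabelian_zero]
  ring

theorem offMassRate_vertex_zero (hb : 0 < b) : offMassRate a b (vertex 0) = 2 * a / b := by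
  rw [offMassRate, vlDenom_eq, penalty_quasiBabelian_zero, penalty_quasiBabelian_one,
    penalty_quasiBabelian_two, offMass_vertex_zero]
  simp [vertex]
  field_simp
  ring

theorem continuousAt_offMassRate (ha : 0 < a) (hb : 0 < b) :
    ContinuousAt (offMassRate a b) (vertex 0) := by
  have hD := vlDenom_quasiBabelian_pos ha hb (vertex_mem_simplex3 0)
  have := continuous_penalty (quasiBabelian a b) 1
  have := continuous_penalty (quasiBabelian a b) 2
  have := continuous_vlDenom (quasiBabelian a b)
  unfold offMassRate
  fun_prop (disch := exact hD.ne')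

theorem offMass_VLdyn_pos (ha : 0 < a) (hb : 0 < b) (hp : p ∈ simplex3)
    (hσ : 0 < offMass p) : 0 < offMass (VLdyn (quasiBabelian a b) p) := by
  have hsum : 0 < penalty (quasiBabelian a b) p 1 + penalty (quasiBabelian a b) p 2 := by
    rw [penalty_quasiBabelian_one, penalty_quasiBabelian_two]
    nlinarith [hp.1 0, show offMass p = p 1 + p 2 from rfl]
  rw [offMass_VLdyn_quasiBabelian]
  exact mul_pos (div_pos (mul_pos ha hsum) (vlDenom_quasiBabelian_pos ha hb hp)) hσ

theorem exists_offMass_VLdyn_le_mul {c : ℝ} (ha : 0 < a) (hb : 0 < b) (hc : 2 * a / b < c) :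
    ∃ δ > 0, ∀ p ∈ simplex3, offMass p < δ →
      offMass (VLdyn (quasiBabelian a b) p) ≤ c * offMass p := by
  rw [← offMassRate_vertex_zero hb] at hc
  obtain ⟨δ, hδ, hrate⟩ :=
    exists_offMass_lt_of_eventually ((continuousAt_offMassRate ha hb).eventually (gt_mem_nhds hc))
  refine ⟨δ, hδ, fun p hp hpδ => ?_⟩
  rw [offMass_VLdyn_quasiBabelian]
  exact mul_le_mul_of_nonneg_right (hrate p hp hpδ).le (offMass_nonneg hp)

theorem exists_le_offMass_VLdyn (ha : 0 < a) (hb : 0 < b) (h : 1 < 2 * a / b) :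
    ∃ δ > 0, ∀ p ∈ simplex3, offMass p < δ →
      offMass p ≤ offMass (VLdyn (quasiBabelian a b) p) := by
  rw [← offMassRate_vertex_zero hb] at h
  obtain ⟨δ, hδ, hrate⟩ :=
    exists_offMass_lt_of_eventually ((continuousAt_offMassRate ha hb).eventually (lt_mem_nhds h))
  refine ⟨δ, hδ, fun p hp hpδ => ?_⟩
  rw [offMass_VLdyn_quasiBabelian]
  exact le_mul_of_one_le_left (offMass_nonneg hp) (hrate p hp hpδ).le

theorem exists_forall_tendsto_vertex_zero (ha : 0 < a) (hb : 0 < b) (h : 2 * a / b < 1) :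
    ∃ δ > 0, ∀ q ∈ simplex3 ∩ {p | offMass p < δ},
      Tendsto (fun n => (VLdyn (quasiBabelian a b))^[n] q) atTop (𝓝 (vertex 0)) := by
  obtain ⟨c, hc, hc1⟩ := exists_between h
  obtain ⟨δ, hδ, hcontr⟩ := exists_offMass_VLdyn_le_mul ha hb hc
  have hmaps : MapsTo (VLdyn (quasiBabelian a b)) (simplex3 ∩ {p | offMass p < δ})
      (simplex3 ∩ {p | offMass p < δ}) := fun p ⟨hp, hpδ⟩ =>
    ⟨VLdyn_quasiBabelian_mapsTo ha hb hp,
      ((hcontr p hp hpδ).trans (mul_le_of_le_one_left (offMass_nonneg hp) hc1.le)).trans_lt hpδ⟩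
  refine ⟨δ, hδ, fun q hq =>
    tendsto_vertex_zero_of_offMass (fun n => (hmaps.iterate n hq).1) ?_⟩
  exact tendsto_iterate_zero_of_contracting ((by positivity : 0 ≤ 2 * a / b).trans hc.le) hc1
    hmaps (fun p hp => offMass_nonneg hp.1) (fun p hp => hcontr p hp.1 hp.2) hq

theorem not_tendsto_vertex_zero (ha : 0 < a) (hb : 0 < b) (h : 1 < 2 * a / b)
    (hp : p ∈ simplex3) (hσ : 0 < offMass p) :
    ¬ Tendsto (fun n => (VLdyn (quasiBabelian a b))^[n] p) atTop (𝓝 (vertex 0)) := by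
  obtain ⟨δ, hδ, hgrow⟩ := exists_le_offMass_VLdyn ha hb h
  intro hconv
  refine not_tendsto_iterate_zero_of_nondecreasing (V := offMass) hδ
    (VLdyn_quasiBabelian_mapsTo ha hb) (fun p hp => offMass_VLdyn_pos ha hb hp) hgrow hp hσ ?_
  rw [← offMass_vertex_zero]
  exact (continuous_offMass.tendsto _).comp hconv

end QuasiBabelian

theorem stmt_18 (a b : ℝ) (ha : 0 < a) (hb : 0 < b)
    (A : Matrix (Fin 3) (Fin 3) ℝ)
    (hA : A = !![0, a, a; b, 0, a; b, a, 0]) (ρ : ℝ) (hρ : ρ = b / a) :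
    (2 < ρ → ∃ U ∈ 𝓝[simplex3] (vertex 0), ∀ q ∈ U,
      Tendsto (fun n => (VLdyn A)^[n] q) atTop (𝓝 (vertex 0))) ∧
    (ρ < 2 → ∀ U ∈ 𝓝[simplex3] (vertex 0), ∃ q ∈ U,
      ¬ Tendsto (fun n => (VLdyn A)^[n] q) atTop (𝓝 (vertex 0))) := by
  obtain rfl : A = quasiBabelian a b := hA
  subst hρ
  constructor
  · intro hρ
    obtain ⟨δ, hδ, hconv⟩ := exists_forall_tendsto_vertex_zero ha hb
      (by rw [div_lt_one hb]; rw [lt_div_iff₀ ha] at hρ; linarith)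
    exact ⟨_, simplex3_inter_offMass_lt_mem_nhdsWithin hδ, hconv⟩
  · intro hρ U hU
    obtain ⟨q, hqU, hqS, hq⟩ := exists_mem_simplex3_offMass_pos hU
    exact ⟨q, hqU, not_tendsto_vertex_zero ha hb
      (by rw [one_lt_div hb]; rw [div_lt_iff₀ ha] at hρ; linarith) hqS hq⟩
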